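/- Consider K-user secure summation with user selection over F_q with inputs of length L. Then for every subset U ⊆ [K], every k ∈ U, and every proper subset V ⊊ U\{k}: H(W_k | X_k^U, (W_i, X_i^U)_{i∈V}) ≥ L·log₂ q. -/

import Mathlib

open scoped BigOperators

open Classical in
/-- The probability that the finitely-valued random variable `X` takes the value `s`,
under the probability weights `μ` on the finite sample space `Ω`. -/
noncomputable def probOf {Ω S : Type*} [Fintype Ω] (μ : Ω → ℝ) (X : Ω → S) (s : S) : ℝ :=
  ∑ ω ∈ Finset.univ.filter (fun ω => X ω = s), μ ω

/-- Shannon entropy (in bits) of a finitely-valued random variable. -/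
noncomputable def Hent {Ω S : Type*} [Fintype Ω] [Fintype S] (μ : Ω → ℝ) (X : Ω → S) : ℝ :=
  - ∑ s : S, probOf μ X s * Real.logb 2 (probOf μ X s)

/-- Conditional entropy H(X | Y) (in bits). -/
noncomputable def Hcond {Ω S T : Type*} [Fintype Ω] [Fintype S] [Fintype T]
    (μ : Ω → ℝ) (X : Ω → S) (Y : Ω → T) : ℝ :=
  Hent μ (fun ω => (X ω, Y ω)) - Hent μ Y

/-- Mutual information I(X ; Y) (in bits). -/
noncomputable def MI {Ω S T : Type*} [Fintype Ω] [Fintype S] [Fintype T]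
    (μ : Ω → ℝ) (X : Ω → S) (Y : Ω → T) : ℝ :=
  Hent μ X + Hent μ Y - Hent μ (fun ω => (X ω, Y ω))

/-- Conditional mutual information I(X ; Y | Z) (in bits). -/
noncomputable def CMI {Ω S T U : Type*} [Fintype Ω] [Fintype S] [Fintype T] [Fintype U]
    (μ : Ω → ℝ) (X : Ω → S) (Y : Ω → T) (Z : Ω → U) : ℝ :=
  Hcond μ X Z - Hcond μ X (fun ω => (Y ω, Z ω))

/-!
Since `V` misses some user `j ∈ U \ {k}`, the homomorphism `w ↦ ((w k, w|V), ∑_{i ∈ U} w i)` is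
surjective, so uniform inputs make `(W_k, W_V)` uniform and independent of `∑_U W`. The chain
rule and data processing bound the leakage
`I(W_k; X_k^U, (W_i, X_i^U)_{i ∈ V}) ≤ I(W_k; W_V) + I((W_k, W_V); ∑_U W) + I(W_U; X_U | ∑_U W)`,
and all three terms vanish, the last one by security. Hence `H(W_k | …) = H(W_k) = L log₂ q`.
The Shannon inequalities used all reduce to submodularity of entropy, which is Gibbs' inequality
(from `log x ≤ x - 1`) applied to the ratio `p(a,c) p(b,c) / (p(a,b,c) p(c))`.
-/

open Finset

section Entropy

variable {Ω : Type*} [Fintype Ω] (μ : Ω → ℝ)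

lemma probOf_nonneg (hμ0 : ∀ ω, 0 ≤ μ ω) {S : Type*} (X : Ω → S) (s : S) :
    0 ≤ probOf μ X s :=
  sum_nonneg fun ω _ => hμ0 ω

lemma le_probOf_apply (hμ0 : ∀ ω, 0 ≤ μ ω) {S : Type*} (X : Ω → S) (ω : Ω) :
    μ ω ≤ probOf μ X (X ω) := by
  classical
  exact single_le_sum (fun ω' _ => hμ0 ω') (by simp)

lemma probOf_eq_sum_ite {S : Type*} [DecidableEq S] (X : Ω → S) (s : S) :
    probOf μ X s = ∑ ω, if X ω = s then μ ω else 0 := by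
  rw [probOf]
  convert sum_filter (fun ω => X ω = s) μ

lemma sum_probOf_mul {S : Type*} [Fintype S] (X : Ω → S) (g : S → ℝ) :
    ∑ s, probOf μ X s * g s = ∑ ω, μ ω * g (X ω) := by
  classical
  simp_rw [probOf_eq_sum_ite, sum_mul, ite_mul, zero_mul]
  rw [sum_comm]
  simp

lemma sum_probOf {S : Type*} [Fintype S] (X : Ω → S) :
    ∑ s, probOf μ X s = ∑ ω, μ ω := by
  simpa using sum_probOf_mul μ X 1

lemma probOf_comp {S T : Type*} [Fintype S] [DecidableEq T] (X : Ω → S) (φ : S → T) (t : T) :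
    probOf μ (fun ω => φ (X ω)) t = ∑ s with φ s = t, probOf μ X s := by
  classical
  rw [sum_filter, probOf_eq_sum_ite]
  simpa [mul_ite] using (sum_probOf_mul μ X fun s => if φ s = t then 1 else 0).symm

lemma sum_probOf_pair_left {S T : Type*} [Fintype S] [Fintype T] (X : Ω → S) (Y : Ω → T) (t : T) :
    ∑ s, probOf μ (fun ω => (X ω, Y ω)) (s, t) = probOf μ Y t := by
  classical
  rw [probOf_comp μ (fun ω => (X ω, Y ω)) Prod.snd, sum_filter, Fintype.sum_prod_type]
  simp

lemma sum_probOf_pair_right {S T : Type*} [Fintype S] [Fintype T] (X : Ω → S) (Y : Ω → T) (s : S) :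
    ∑ t, probOf μ (fun ω => (X ω, Y ω)) (s, t) = probOf μ X s := by
  classical
  rw [probOf_comp μ (fun ω => (X ω, Y ω)) Prod.fst, sum_filter, Fintype.sum_prod_type,
    sum_eq_single s (fun s' _ hs' => by simp [hs']) (by simp)]
  simp

lemma Hent_eq_sum_log {S : Type*} [Fintype S] (X : Ω → S) :
    Hent μ X = -(∑ ω, μ ω * Real.log (probOf μ X (X ω))) / Real.log 2 := by
  rw [Hent, sum_probOf_mul μ X fun s => Real.logb 2 (probOf μ X s)]
  simp only [Real.logb, mul_div_assoc', ← sum_div, neg_div]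

lemma Hent_comp_of_injective {S T : Type*} [Fintype S] [Fintype T] (X : Ω → S) {f : S → T}
    (hf : Function.Injective f) : Hent μ (fun ω => f (X ω)) = Hent μ X := by
  classical
  have hfiber : ∀ ω, probOf μ (fun ω => f (X ω)) (f (X ω)) = probOf μ X (X ω) := fun ω => by
    simp only [probOf, hf.eq_iff]
  simp only [Hent_eq_sum_log, hfiber]

end Entropy

section Shannon

variable {Ω : Type*} [Fintype Ω] (μ : Ω → ℝ)

lemma sum_mul_log_nonpos (hμ0 : ∀ ω, 0 ≤ μ ω) (hμ1 : ∑ ω, μ ω = 1) (g : Ω → ℝ)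
    (hg : ∀ ω, 0 < μ ω → 0 < g ω) (hsum : ∑ ω, μ ω * g ω ≤ 1) :
    ∑ ω, μ ω * Real.log (g ω) ≤ 0 := by
  have hterm : ∀ ω, μ ω * Real.log (g ω) ≤ μ ω * g ω - μ ω := fun ω => by
    rcases (hμ0 ω).eq_or_lt with h | h
    · simp [← h]
    · nlinarith [Real.log_le_sub_one_of_pos (hg ω h)]
  calc ∑ ω, μ ω * Real.log (g ω) ≤ ∑ ω, (μ ω * g ω - μ ω) := sum_le_sum fun ω _ => hterm ω
    _ ≤ 0 := by rw [sum_sub_distrib, hμ1]; linarith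

variable {S T U : Type*} [Fintype S] [Fintype T] [Fintype U]

lemma sum_probOf_triple_mul_ratio_le_one (hμ0 : ∀ ω, 0 ≤ μ ω) (hμ1 : ∑ ω, μ ω = 1)
    (A : Ω → S) (B : Ω → T) (C : Ω → U) :
    ∑ v : S × T × U, probOf μ (fun ω => (A ω, B ω, C ω)) v *
        (probOf μ (fun ω => (A ω, C ω)) (v.1, v.2.2) * probOf μ (fun ω => (B ω, C ω)) (v.2.1, v.2.2)
          / (probOf μ (fun ω => (A ω, B ω, C ω)) v * probOf μ C v.2.2)) ≤ 1 := by
  set pAC := probOf μ (fun ω => (A ω, C ω))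
  set pBC := probOf μ (fun ω => (B ω, C ω))
  set pC := probOf μ C
  have hcancel : ∀ (p x y : ℝ), 0 ≤ p → 0 ≤ x → 0 ≤ y → p * (x / (p * y)) ≤ x / y :=
    fun p x y hp hx hy => by
      rcases hp.eq_or_lt with h | h
      · simp [← h, div_nonneg hx hy]
      · rw [mul_div_assoc', mul_div_mul_left _ _ h.ne']
  calc _ ≤ ∑ v : S × T × U, pAC (v.1, v.2.2) * pBC (v.2.1, v.2.2) / pC v.2.2 :=
        sum_le_sum fun v _ => hcancel _ _ _ (probOf_nonneg μ hμ0 _ _)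
          (mul_nonneg (probOf_nonneg μ hμ0 _ _) (probOf_nonneg μ hμ0 _ _)) (probOf_nonneg μ hμ0 _ _)
    _ = ∑ c, (∑ a, pAC (a, c)) * (∑ b, pBC (b, c)) / pC c := by
        simp only [Fintype.sum_prod_type, sum_mul_sum, sum_div]
        exact (sum_congr rfl fun a _ => sum_comm).trans sum_comm
    _ = ∑ c, pC c := by
        simp only [pAC, pBC, pC, sum_probOf_pair_left, mul_self_div_self]
    _ = 1 := by rw [sum_probOf, hμ1]

lemma Hent_submodular (hμ0 : ∀ ω, 0 ≤ μ ω) (hμ1 : ∑ ω, μ ω = 1)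
    (A : Ω → S) (B : Ω → T) (C : Ω → U) :
    Hent μ (fun ω => (A ω, B ω, C ω)) + Hent μ C
      ≤ Hent μ (fun ω => (A ω, C ω)) + Hent μ (fun ω => (B ω, C ω)) := by
  set pABC := probOf μ (fun ω => (A ω, B ω, C ω))
  set pAC := probOf μ (fun ω => (A ω, C ω))
  set pBC := probOf μ (fun ω => (B ω, C ω))
  set pC := probOf μ C
  set ratio : Ω → ℝ := fun ω =>
    pAC (A ω, C ω) * pBC (B ω, C ω) / (pABC (A ω, B ω, C ω) * pC (C ω))
  have hpos : ∀ ω, 0 < μ ω → 0 < pAC (A ω, C ω) ∧ 0 < pBC (B ω, C ω) ∧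
      0 < pABC (A ω, B ω, C ω) ∧ 0 < pC (C ω) := fun ω h =>
    ⟨h.trans_le (le_probOf_apply μ hμ0 _ ω), h.trans_le (le_probOf_apply μ hμ0 _ ω),
      h.trans_le (le_probOf_apply μ hμ0 _ ω), h.trans_le (le_probOf_apply μ hμ0 _ ω)⟩
  have hlog : ∀ ω, μ ω * Real.log (ratio ω) = μ ω * Real.log (pAC (A ω, C ω))
      + μ ω * Real.log (pBC (B ω, C ω)) - μ ω * Real.log (pABC (A ω, B ω, C ω))
      - μ ω * Real.log (pC (C ω)) := fun ω => by
    rcases (hμ0 ω).eq_or_lt with h | h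
    · simp [← h]
    · obtain ⟨h₁, h₂, h₃, h₄⟩ := hpos ω h
      rw [Real.log_div (mul_pos h₁ h₂).ne' (mul_pos h₃ h₄).ne', Real.log_mul h₁.ne' h₂.ne',
        Real.log_mul h₃.ne' h₄.ne']
      ring
  have hgibbs : ∑ ω, μ ω * Real.log (ratio ω) ≤ 0 := by
    refine sum_mul_log_nonpos μ hμ0 hμ1 ratio (fun ω h => ?_) ?_
    · obtain ⟨h₁, h₂, h₃, h₄⟩ := hpos ω h
      exact div_pos (mul_pos h₁ h₂) (mul_pos h₃ h₄)
    · simpa only [sum_probOf_mul] using sum_probOf_triple_mul_ratio_le_one μ hμ0 hμ1 A B C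
  simp only [hlog, sum_sub_distrib, sum_add_distrib] at hgibbs
  simp only [Hent_eq_sum_log]
  rw [← sub_nonneg]
  field_simp
  linarith

end Shannon

section Information

variable {Ω : Type*} [Fintype Ω] (μ : Ω → ℝ)
variable {S T U R Q : Type*} [Fintype S] [Fintype T] [Fintype U] [Fintype R] [Fintype Q]

lemma Hent_const_unit (hμ1 : ∑ ω, μ ω = 1) : Hent μ (fun _ : Ω => ()) = 0 := by
  simp [Hent, probOf, hμ1]

lemma CMI_nonneg (hμ0 : ∀ ω, 0 ≤ μ ω) (hμ1 : ∑ ω, μ ω = 1)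
    (X : Ω → S) (Y : Ω → T) (Z : Ω → U) : 0 ≤ CMI μ X Y Z := by
  have := Hent_submodular μ hμ0 hμ1 X Y Z
  simp only [CMI, Hcond]
  linarith

lemma MI_nonneg (hμ0 : ∀ ω, 0 ≤ μ ω) (hμ1 : ∑ ω, μ ω = 1) (X : Ω → S) (Y : Ω → T) :
    0 ≤ MI μ X Y := by
  have := Hent_submodular μ hμ0 hμ1 X Y fun _ => ()
  have hXY := Hent_comp_of_injective μ (fun ω => (X ω, Y ω)) (f := fun p => (p.1, p.2, ()))
    fun _ _ h => by simpa [Prod.ext_iff] using h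
  have hX := Hent_comp_of_injective μ X (f := fun x => (x, ())) fun _ _ h => by simpa using h
  have hY := Hent_comp_of_injective μ Y (f := fun y => (y, ())) fun _ _ h => by simpa using h
  simp only [MI]
  linarith [Hent_const_unit μ hμ1]

lemma MI_pair_eq (X : Ω → S) (Y : Ω → T) (Z : Ω → U) :
    MI μ X (fun ω => (Y ω, Z ω)) = MI μ X Z + CMI μ X Y Z := by
  simp only [MI, CMI, Hcond]
  ring

lemma MI_comp_le (hμ0 : ∀ ω, 0 ≤ μ ω) (hμ1 : ∑ ω, μ ω = 1) (X : Ω → S) (Y : Ω → T)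
    (φ : T → U) : MI μ X (fun ω => φ (Y ω)) ≤ MI μ X Y := by
  have := CMI_nonneg μ hμ0 hμ1 Y X fun ω => φ (Y ω)
  have hY := Hent_comp_of_injective μ Y (f := fun y => (y, φ y)) fun _ _ h => congrArg Prod.fst h
  have hXY := Hent_comp_of_injective μ (fun ω => (X ω, Y ω)) (f := fun p => (p.2, p.1, φ p.2))
    fun _ _ h => by simp only [Prod.mk.injEq] at h; exact Prod.ext h.2.1 h.1
  simp only [MI, CMI, Hcond] at *
  linarith

lemma CMI_le_MI_pair (hμ0 : ∀ ω, 0 ≤ μ ω) (hμ1 : ∑ ω, μ ω = 1)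
    (X : Ω → S) (Y : Ω → T) (Z : Ω → U) :
    CMI μ X Y Z ≤ MI μ (fun ω => (X ω, Z ω)) Y := by
  have := MI_nonneg μ hμ0 hμ1 Y Z
  have hXYZ := Hent_comp_of_injective μ (fun ω => (X ω, Y ω, Z ω))
    (f := fun p => ((p.1, p.2.2), p.2.1)) fun _ _ h => by
      simp only [Prod.mk.injEq] at h; exact Prod.ext h.1.1 (Prod.ext h.2 h.1.2)
  simp only [MI, CMI, Hcond] at *
  linarith

lemma CMI_comp_left_le (hμ0 : ∀ ω, 0 ≤ μ ω) (hμ1 : ∑ ω, μ ω = 1)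
    (X : Ω → R) (ψ : R → S) (Y : Ω → T) (Z : Ω → U) :
    CMI μ (fun ω => ψ (X ω)) Y Z ≤ CMI μ X Y Z := by
  have := CMI_nonneg μ hμ0 hμ1 X Y fun ω => (ψ (X ω), Z ω)
  have hXZ := Hent_comp_of_injective μ (fun ω => (X ω, Z ω))
    (f := fun p => (p.1, ψ p.1, p.2)) fun _ _ h => by
      simp only [Prod.mk.injEq] at h; exact Prod.ext h.1 h.2.2
  have hXYZ := Hent_comp_of_injective μ (fun ω => (X ω, Y ω, Z ω))
    (f := fun p => (p.1, p.2.1, ψ p.1, p.2.2)) fun _ _ h => by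
      simp only [Prod.mk.injEq] at h; exact Prod.ext h.1 (Prod.ext h.2.1 h.2.2.2)
  have hYZ := Hent_comp_of_injective μ (fun ω => (ψ (X ω), Y ω, Z ω))
    (f := fun p => (p.2.1, p.1, p.2.2)) fun _ _ h => by
      simp only [Prod.mk.injEq] at h; exact Prod.ext h.2.1 (Prod.ext h.1 h.2.2)
  simp only [CMI, Hcond] at *
  linarith

lemma Hcond_eq_sub_MI (X : Ω → S) (Y : Ω → T) : Hcond μ X Y = Hent μ X - MI μ X Y := by
  simp only [Hcond, MI]
  ring

lemma MI_pair_le_MI_add_MI_add_CMI (hμ0 : ∀ ω, 0 ≤ μ ω) (hμ1 : ∑ ω, μ ω = 1)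
    (A : Ω → S) (B : Ω → T) (C : Ω → U) (Z : Ω → Q) (X : Ω → R) (ψ : R → S × T)
    (hψ : ∀ ω, ψ (X ω) = (A ω, B ω)) :
    MI μ A (fun ω => (C ω, B ω))
      ≤ MI μ A B + MI μ (fun ω => (A ω, B ω)) Z + CMI μ X C Z := by
  have hCMI : CMI μ (fun ω => (A ω, B ω)) C Z ≤ CMI μ X C Z := by
    simpa only [hψ] using CMI_comp_left_le μ hμ0 hμ1 X ψ C Z
  calc MI μ A (fun ω => (C ω, B ω))
      = MI μ A B + CMI μ A C B := MI_pair_eq μ A C B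
    _ ≤ MI μ A B + MI μ (fun ω => (A ω, B ω)) C := by
        gcongr; exact CMI_le_MI_pair μ hμ0 hμ1 A C B
    _ ≤ MI μ A B + MI μ (fun ω => (A ω, B ω)) (fun ω => (C ω, Z ω)) := by
        gcongr; exact MI_comp_le μ hμ0 hμ1 _ (fun ω => (C ω, Z ω)) Prod.fst
    _ ≤ MI μ A B + MI μ (fun ω => (A ω, B ω)) Z + CMI μ X C Z := by
        rw [MI_pair_eq, add_assoc]; gcongr

end Information

section Uniform

variable {Ω : Type*} [Fintype Ω] {S T : Type*} [Fintype S] [Fintype T]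

def IsUniform (μ : Ω → ℝ) (X : Ω → S) : Prop :=
  ∀ s, probOf μ X s = (Fintype.card S : ℝ)⁻¹

variable {μ : Ω → ℝ}

lemma Hent_of_isUniform {X : Ω → S} (h : IsUniform μ X) :
    Hent μ X = Real.logb 2 (Fintype.card S) := by
  unfold IsUniform at h
  rcases (Fintype.card S).eq_zero_or_pos with hS | hS
  · simp [Hent, Fintype.card_eq_zero_iff.mp hS]
  · simp [Hent, h, Real.logb_inv, hS.ne']

lemma IsUniform.fst [Nonempty T] {X : Ω → S} {Y : Ω → T}
    (h : IsUniform μ fun ω => (X ω, Y ω)) : IsUniform μ X := fun s => by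
  unfold IsUniform at h
  rw [← sum_probOf_pair_right μ X Y s]
  simp [h, Fintype.card_prod]

lemma IsUniform.snd [Nonempty S] {X : Ω → S} {Y : Ω → T}
    (h : IsUniform μ fun ω => (X ω, Y ω)) : IsUniform μ Y := fun t => by
  unfold IsUniform at h
  rw [← sum_probOf_pair_left μ X Y t]
  simp [h, Fintype.card_prod]
  field_simp

lemma MI_eq_zero_of_isUniform [Nonempty S] [Nonempty T] {X : Ω → S} {Y : Ω → T}
    (h : IsUniform μ fun ω => (X ω, Y ω)) : MI μ X Y = 0 := by
  rw [MI, Hent_of_isUniform h.fst, Hent_of_isUniform h.snd, Hent_of_isUniform h,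
    Fintype.card_prod, Nat.cast_mul, Real.logb_mul (by positivity) (by positivity)]
  ring

lemma IsUniform.comp_addMonoidHom {G H : Type*} [AddGroup G] [Fintype G] [AddGroup H] [Fintype H]
    [DecidableEq H] {X : Ω → G} (h : IsUniform μ X) (φ : G →+ H) (hφ : Function.Surjective φ) :
    IsUniform μ fun ω => φ (X ω) := fun t => by
  have hfiber : ∀ t, #{g | φ g = t} = #{g | φ g = 0} := fun t =>
    AddMonoidHom.card_fiber_eq_of_mem_range φ (hφ t) (hφ 0)
  have hcard : Fintype.card G = Fintype.card H * #{g | φ g = 0} := by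
    simpa [hfiber] using card_eq_sum_card_fiberwise (f := φ) (s := univ) (t := univ) (by simp)
  have hpos : 0 < #{g | φ g = 0} := card_pos.mpr ⟨0, by simp⟩
  rw [probOf_comp, sum_congr rfl fun g _ => h g, sum_const, hfiber, hcard, nsmul_eq_mul]
  push_cast
  field_simp

end Uniform

section Masking

variable {ι A : Type*} [AddCommGroup A]

def evalRestrictSum (k : ι) (V U : Finset ι) : (ι → A) →+ (A × (V → A)) × A :=
  AddMonoidHom.mk' (fun w => ((w k, fun i => w i), ∑ i ∈ U, w i)) fun _ _ =>
    Prod.ext rfl sum_add_distrib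

lemma evalRestrictSum_surjective [DecidableEq ι] {k j : ι} {V U : Finset ι}
    (hk : k ∈ U) (hj : j ∈ U) (hjk : j ≠ k) (hkV : k ∉ V) (hjV : j ∉ V) (hVU : V ⊆ U) :
    Function.Surjective (evalRestrictSum (A := A) k V U) := by
  rintro ⟨⟨a, b⟩, s⟩
  -- user `j` is outside `V ∪ {k}`, so its coordinate can absorb any prescribed sum
  let w : ι → A := fun i =>
    if i = k then a else if h : i ∈ V then b ⟨i, h⟩ else if i = j then s - a - ∑ i, b i else 0
  have hwV : ∀ i : V, w i = b i := fun i => by simp [w, ne_of_mem_of_not_mem i.2 hkV]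
  have hsum : ∑ i ∈ U, w i = s := by
    have hsub : insert k (insert j V) ⊆ U := insert_subset hk (insert_subset hj hVU)
    rw [← sum_subset hsub fun i _ hi => by simp_all [w], sum_insert (by simp [hjk.symm, hkV]),
      sum_insert hjV, ← sum_coe_sort V, sum_congr rfl fun i _ => hwV i]
    simp [w, hjk, hjV]
  refine ⟨w, ?_⟩
  change ((w k, fun i : V => w i), ∑ i ∈ U, w i) = ((a, b), s)
  rw [funext hwV, hsum, show w k = a by simp [w]]

end Masking

theorem secure_summation_entropy_lower_bound_general
    (K L q : ℕ)
    (F : Type) [Field F] [Fintype F] (hF : Fintype.card F = q)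
    (Ω : Type) [Fintype Ω] (μ : Ω → ℝ)
    (hμ0 : ∀ ω, 0 ≤ μ ω) (hμ1 : (∑ ω, μ ω) = 1)
    (M : Finset (Fin K) → Fin K → Type) [∀ U k, Fintype (M U k)]
    (W : Fin K → Ω → (Fin L → F))
    (X : ∀ (U : Finset (Fin K)) (k : Fin K), Ω → M U k)
    -- the inputs W_1, …, W_K are i.i.d. uniform over F_q^L
    (hWunif : ∀ w : Fin K → Fin L → F,
      probOf μ (fun ω (k : Fin K) => W k ω) w = ((q : ℝ) ^ (L * K))⁻¹)
    -- security: I((W_k)_{k∈U}; (X_k^U)_{k∈U} | Σ_{k∈U} W_k) = 0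
    (hsec : ∀ U : Finset (Fin K),
      CMI μ (fun ω (k : ↥U) => W k.1 ω) (fun ω (k : ↥U) => X U k.1 ω)
        (fun ω => ∑ k ∈ U, W k ω) = 0) :
    ∀ (U : Finset (Fin K)) (k : Fin K), k ∈ U → ∀ V : Finset (Fin K), V ⊂ U.erase k →
      Hcond μ (W k)
        (fun ω => (X U k ω, fun i : ↥V => (W i.1 ω, X U i.1 ω)))
        ≥ (L : ℝ) * Real.logb 2 q := by
  classical
  intro U k hkU V hV
  obtain ⟨j, hj, hjV⟩ := exists_of_ssubset hV
  have hVU : V ⊆ U := hV.subset.trans (erase_subset k U)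
  have hkV : k ∉ V := fun h => by simpa using hV.subset h
  have hW : IsUniform μ fun ω i => W i ω := fun w => by
    simp [hWunif w, hF, pow_mul]
  have hunif : IsUniform μ fun ω => ((W k ω, fun i : V => W i ω), ∑ i ∈ U, W i ω) :=
    hW.comp_addMonoidHom (evalRestrictSum k V U) <| evalRestrictSum_surjective hkU
      (mem_of_mem_erase hj) (ne_of_mem_erase hj) hkV hjV hVU
  have hleak : MI μ (W k) (fun ω => (X U k ω, fun i : V => (W i ω, X U i ω))) ≤ 0 := calc
    _ ≤ MI μ (W k) fun ω => ((fun i : U => X U i ω), fun i : V => W i ω) :=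
        MI_comp_le μ hμ0 hμ1 _ _ fun c => (c.1 ⟨k, hkU⟩, fun i => (c.2 i, c.1 ⟨i, hVU i.2⟩))
    _ ≤ MI μ (W k) (fun ω (i : V) => W i ω)
          + MI μ (fun ω => (W k ω, fun i : V => W i ω)) (fun ω => ∑ i ∈ U, W i ω)
          + CMI μ (fun ω (i : U) => W i ω) (fun ω (i : U) => X U i ω) fun ω => ∑ i ∈ U, W i ω :=
        MI_pair_le_MI_add_MI_add_CMI μ hμ0 hμ1 _ _ _ _ _
          (fun w => (w ⟨k, hkU⟩, fun i => w ⟨i, hVU i.2⟩)) fun _ => rfl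
    _ = 0 := by
        rw [MI_eq_zero_of_isUniform hunif.fst, MI_eq_zero_of_isUniform hunif, hsec U]
        simp
  have hent : Hent μ (W k) = L * Real.logb 2 q := by
    rw [Hent_of_isUniform hunif.fst.fst, Fintype.card_fun, hF, Fintype.card_fin, Nat.cast_pow,
      Real.logb_pow]
  rw [Hcond_eq_sub_MI, hent]
  linarith

/-- Lemma 3 of the paper: in K-user secure summation with user selection over `F` (= F_q)
with inputs of length `L`, for every selected set `U`, every `k ∈ U` and every
`V ⊊ U∖{k}`, we have H(W_k | X_k^U, (W_i, X_i^U)_{i∈V}) ≥ L·log₂ q. -/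
theorem secure_summation_entropy_lower_bound
    (K L q : ℕ) (hK : 1 ≤ K) (hL : 1 ≤ L) (hq : IsPrimePow q)
    (F : Type) [Field F] [Fintype F] (hF : Fintype.card F = q)
    (Ω : Type) [Fintype Ω] (μ : Ω → ℝ)
    (hμ0 : ∀ ω, 0 ≤ μ ω) (hμ1 : (∑ ω, μ ω) = 1)
    (SZ : Fin K → Type) [∀ k, Fintype (SZ k)]
    (M : Finset (Fin K) → Fin K → Type) [∀ U k, Fintype (M U k)]
    (W : Fin K → Ω → (Fin L → F)) (Z : ∀ k : Fin K, Ω → SZ k)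
    (X : ∀ (U : Finset (Fin K)) (k : Fin K), Ω → M U k)
    -- the inputs W_1, …, W_K are i.i.d. uniform over F_q^L
    (hWunif : ∀ w : Fin K → Fin L → F,
      probOf μ (fun ω (k : Fin K) => W k ω) w = ((q : ℝ) ^ (L * K))⁻¹)
    -- (W_1,…,W_K) is independent of (Z_1,…,Z_K)
    (hWZind : ∀ (w : Fin K → Fin L → F) (z : ∀ k : Fin K, SZ k),
      probOf μ (fun ω => ((fun k : Fin K => W k ω), (fun k : Fin K => Z k ω))) (w, z)
        = probOf μ (fun ω (k : Fin K) => W k ω) w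
            * probOf μ (fun ω (k : Fin K) => Z k ω) z)
    -- each message X_k^U is a deterministic function of (W_k, Z_k)
    (hXdet : ∀ (U : Finset (Fin K)) (k : Fin K), k ∈ U →
      ∃ f : (Fin L → F) → SZ k → M U k, ∀ ω, X U k ω = f (W k ω) (Z k ω))
    -- correctness: H(Σ_{k∈U} W_k | (X_k^U)_{k∈U}) = 0
    (hcorr : ∀ U : Finset (Fin K),
      Hcond μ (fun ω => ∑ k ∈ U, W k ω) (fun ω (k : ↥U) => X U k.1 ω) = 0)
    -- security: I((W_k)_{k∈U}; (X_k^U)_{k∈U} | Σ_{k∈U} W_k) = 0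
    (hsec : ∀ U : Finset (Fin K),
      CMI μ (fun ω (k : ↥U) => W k.1 ω) (fun ω (k : ↥U) => X U k.1 ω)
        (fun ω => ∑ k ∈ U, W k ω) = 0) :
    ∀ (U : Finset (Fin K)) (k : Fin K), k ∈ U → ∀ V : Finset (Fin K), V ⊂ U.erase k →
      Hcond μ (W k)
        (fun ω => (X U k ω, fun i : ↥V => (W i.1 ω, X U i.1 ω)))
        ≥ (L : ℝ) * Real.logb 2 q :=
  secure_summation_entropy_lower_bound_general K L q F hF Ω μ hμ0 hμ1 M W X hWunif hsec
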